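/- If alternative a is a Condorcet winner (M_{a,b} > 0 for all b ≠ a, where M is the skew-symmetric margin matrix), then the point mass δ_a is the unique maximal lottery, i.e., the unique probability vector π with π^T M π' ≥ 0 for all probability vectors π'. -/
import Mathlib


open Matrix

/-- If `a` is a Condorcet winner (`M a b > 0` for all `b ≠ a`, `M` the skew-symmetric
margin matrix), then the point mass `δ_a` is the unique maximal lottery. -/
theorem condorcet_winner_unique_maximalLottery (m : ℕ) (hm : 2 ≤ m)
    (M : Matrix (Fin m) (Fin m) ℝ) (hskew : Mᵀ = -M)
    (a : Fin m) (hCondorcet : ∀ b ≠ a, 0 < M a b)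
    (δ : Fin m → ℝ) (hδ : δ = fun b => if b = a then (1 : ℝ) else 0) :
    (δ ∈ stdSimplex ℝ (Fin m) ∧
      ∀ π' ∈ stdSimplex ℝ (Fin m), 0 ≤ ∑ i, ∑ j, δ i * M i j * π' j) ∧
    (∀ π ∈ stdSimplex ℝ (Fin m),
      (∀ π' ∈ stdSimplex ℝ (Fin m), 0 ≤ ∑ i, ∑ j, π i * M i j * π' j) → π = δ) := by
  have hMaa : M a a = 0 := by
    have := congrFun (congrFun hskew a) a
    simp [Matrix.transpose_apply] at this
    linarith
  have hδmem : δ ∈ stdSimplex ℝ (Fin m) := by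
    subst hδ
    constructor
    · intro i; by_cases h : i = a <;> simp [h]
    · simp
  refine ⟨⟨hδmem, ?_⟩, ?_⟩
  · intro π' hπ'
    have : (∑ i, ∑ j, δ i * M i j * π' j) = ∑ j, M a j * π' j := by
      subst hδ
      rw [Finset.sum_eq_single a]
      · simp
      · intro b _ hb; simp [hb]
      · simp
    rw [this]
    apply Finset.sum_nonneg
    intro j _
    by_cases h : j = a
    · simp [h, hMaa]
    · exact mul_nonneg (le_of_lt (hCondorcet j h)) (hπ'.1 j)
  · intro π hπ hmax
    have key := hmax δ hδmem
    have hsum : (∑ i, ∑ j, π i * M i j * δ j) = ∑ i, π i * M i a := by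
      subst hδ
      apply Finset.sum_congr rfl
      intro i _
      rw [Finset.sum_eq_single a] <;> simp +contextual
    rw [hsum] at key
    have hterm_nonpos : ∀ i ∈ Finset.univ, π i * M i a ≤ 0 := by
      intro i _
      by_cases h : i = a
      · simp [h, hMaa]
      · have hMia : M i a < 0 := by
          have := congrFun (congrFun hskew a) i
          simp [Matrix.transpose_apply] at this
          have := hCondorcet i h
          linarith
        exact mul_nonpos_of_nonneg_of_nonpos (hπ.1 i) (le_of_lt hMia)
    have hzero : ∀ i ∈ Finset.univ, π i * M i a = 0 := by
      have hle : (∑ i, π i * M i a) ≤ 0 := Finset.sum_nonpos hterm_nonpos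
      have heq : (∑ i, π i * M i a) = 0 := le_antisymm hle key
      exact (Finset.sum_eq_zero_iff_of_nonpos hterm_nonpos).mp heq
    have hπzero : ∀ i, i ≠ a → π i = 0 := by
      intro i hi
      have h1 := hzero i (Finset.mem_univ i)
      have hMia : M i a ≠ 0 := by
        have h2 := congrFun (congrFun hskew a) i
        simp [Matrix.transpose_apply] at h2
        have h3 := hCondorcet i hi
        intro h; rw [h2] at h; linarith
      exact (mul_eq_zero.mp h1).resolve_right hMia
    have hπa : π a = 1 := by
      have := hπ.2
      rw [Finset.sum_eq_single a] at this
      · exact this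
      · intro b _ hb; exact hπzero b hb
      · simp
    funext i
    subst hδ
    by_cases h : i = a
    · simp [h, hπa]
    · simp [h, hπzero i h]
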